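/- For the map f: P²(ℂ) ⇢ P²(ℂ), f = [x²y+y²z : xyz : x²y+xy²+2y²z+xz²+yz²], every point of the form [a:1:b] with a, b ∈ ℂ has a preimage with all coordinates nonzero; explicitly, there exists x ∈ ℂ \ {0} with y = ax − x² ≠ 0 and f(x, y, 1) proportional to (a, 1, b). -/

import Mathlib

/-!
Substituting `y = a x - x²` makes the ratio `f0 : f1 = a` automatic, and `f2 = b f1` becomes
`x · q(x) = 0` with `q = quartic a b`. Since `q(a) = 1`, every root `x ≠ 0` of `q` also gives
`y = x (a - x) ≠ 0`. A root `x ≠ 0` exists by algebraic closedness: `q(0) = a + 1`, and when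
`a = -1` the quartic is `x` times a cubic, itself `x` times `x² + 3x + 3` when moreover `b = -1`.
-/

noncomputable def f0 (x y z : ℂ) : ℂ := x^2*y + y^2*z
noncomputable def f1 (x y z : ℂ) : ℂ := x*y*z
noncomputable def f2 (x y z : ℂ) : ℂ := x^2*y + x*y^2 + 2*y^2*z + x*z^2 + y*z^2

open Polynomial

theorem Polynomial.exists_ne_zero_isRoot {K : Type*} [Field K] [IsAlgClosed K] {p : K[X]}
    (hp : p.degree ≠ 0) (h0 : p.eval 0 ≠ 0) : ∃ x, x ≠ 0 ∧ p.IsRoot x := by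
  obtain ⟨x, hx⟩ := IsAlgClosed.exists_root p hp
  exact ⟨x, by rintro rfl; exact h0 hx, hx⟩

noncomputable def quartic (a b : ℂ) : ℂ[X] :=
  X^4 + C (1 - 2*a) * X^3 + C (a^2 - 3*a + b) * X^2 + C (2*a^2 - b*a - 1) * X + C (a + 1)

theorem eval_quartic (a b x : ℂ) :
    (quartic a b).eval x =
      x^4 + (1 - 2*a)*x^3 + (a^2 - 3*a + b)*x^2 + (2*a^2 - b*a - 1)*x + (a + 1) := by
  simp [quartic]

theorem eval_self_quartic (a b : ℂ) : (quartic a b).eval a = 1 := by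
  rw [eval_quartic]; ring

theorem exists_ne_zero_isRoot_quartic (a b : ℂ) : ∃ x, x ≠ 0 ∧ (quartic a b).IsRoot x := by
  rcases ne_or_eq a (-1) with ha | rfl
  · refine exists_ne_zero_isRoot ?_ ?_
    · rw [show (quartic a b).degree = 4 by unfold quartic; compute_degree!]; decide
    · rw [eval_quartic]; simpa [add_eq_zero_iff_eq_neg] using ha
  obtain ⟨x, hx0, hx⟩ : ∃ x, x ≠ 0 ∧ x^3 + 3*x^2 + (4 + b)*x + (1 + b) = 0 := by
    rcases ne_or_eq b (-1) with hb | rfl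
    · have hdeg : (X^3 + 3*X^2 + C (4 + b)*X + C (1 + b) : ℂ[X]).degree = 3 := by
        compute_degree!
      have h0 : 1 + b ≠ 0 := fun h => hb (by linear_combination h)
      obtain ⟨x, hx0, hx⟩ := exists_ne_zero_isRoot (by rw [hdeg]; decide) (by simpa using h0)
      exact ⟨x, hx0, by simpa using hx⟩
    · have hdeg : (X^2 + 3*X + 3 : ℂ[X]).degree = 2 := by compute_degree!
      obtain ⟨x, hx0, hx⟩ := exists_ne_zero_isRoot (by rw [hdeg]; decide) (by norm_num)
      refine ⟨x, hx0, ?_⟩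
      linear_combination x * (by simpa using hx : x^2 + 3*x + 3 = 0)
  refine ⟨x, hx0, ?_⟩
  rw [IsRoot, eval_quartic]
  linear_combination x * hx

/-- For the map `f = [x²y+y²z : xyz : x²y+xy²+2y²z+xz²+yz²]` on `ℙ²(ℂ)`, every point
`[a:1:b]` (a point off the line `y = 0`) has a preimage with all coordinates nonzero:
there exists `x ≠ 0` with `y = ax − x² ≠ 0` such that `f(x, y, 1)` is a nonzero scalar
multiple of `(a, 1, b)`. -/
theorem preimage_off_the_line (a b : ℂ) :
    ∃ x y : ℂ, x ≠ 0 ∧ y = a*x - x^2 ∧ y ≠ 0 ∧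
      ∃ t : ℂ, t ≠ 0 ∧
        f0 x y 1 = t * a ∧ f1 x y 1 = t * 1 ∧ f2 x y 1 = t * b := by
  obtain ⟨x, hx0, hq⟩ := exists_ne_zero_isRoot_quartic a b
  have hxa : a - x ≠ 0 := by
    rintro h
    rw [sub_eq_zero.mp h, IsRoot, eval_self_quartic] at hq
    exact one_ne_zero hq
  have hy : a*x - x^2 ≠ 0 := by
    rw [show a*x - x^2 = x * (a - x) by ring]
    exact mul_ne_zero hx0 hxa
  rw [IsRoot, eval_quartic] at hq
  refine ⟨x, a*x - x^2, hx0, rfl, hy, x * (a*x - x^2), mul_ne_zero hx0 hy, ?_, ?_, ?_⟩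
  · simp only [f0]; ring
  · simp only [f1]
  · simp only [f2]; linear_combination x * hq
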